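/- arXiv:2001.10640 — 3 statements merged into one kernel-verified Lean document; each statement's English description precedes it below -/
import Mathlib

section
/- Let m ≥ 1, let l_1,…,l_m and l'_1,…,l'_m be nonnegative real numbers with l_1 > 0, and let a_1,…,a_m be reals with 1 ≥ a_1 ≥ a_2 ≥ ⋯ ≥ a_m ≥ 0 and a_1 > 0. Then (Σ_{j=1}^m a_j l'_j) / (Σ_{j=1}^m a_j l_j) ≤ max_{1 ≤ k ≤ m} (Σ_{j=1}^k l'_j) / (Σ_{j=1}^k l_j). In particular, the ratio of weighted sums with decreasing weights is bounded by the maximum ratio of prefix sums. -/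
/-!
Writing `H k` for the prefix sums of `h`, Abel summation gives
`∑ a j * h j = ∑_{k < m} (a k - a (k + 1)) * H k + a m * H m`, and every term on the right is
nonnegative when `a` is antitone and nonnegative and the prefix sums `H k` are nonnegative.
Applied to `h = M * l - l'`, where `M` is the maximal prefix ratio, this gives
`∑ a j * l' j ≤ M * ∑ a j * l j`.
-/

open Finset

section PrefixSums

variable {R : Type*} [CommRing R] [PartialOrder R] [IsOrderedRing R] {a f g h : ℕ → R} {m : ℕ}

theorem sum_mul_nonneg_of_prefix_sum_nonneg (ha : AntitoneOn a (Set.Icc 1 m)) (ha_m : 0 ≤ a m)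
    (hh : ∀ k ∈ Icc 1 m, 0 ≤ ∑ j ∈ Icc 1 k, h j) :
    0 ≤ ∑ j ∈ Icc 1 m, a j * h j := by
  have key : ∀ k, 1 ≤ k → k ≤ m → a k * ∑ j ∈ Icc 1 k, h j ≤ ∑ j ∈ Icc 1 k, a j * h j := by
    intro k hk
    induction k, hk using Nat.le_induction with
    | base => simp
    | succ k hk ih =>
      intro hkm
      have hdrop : a (k + 1) ≤ a k := ha (Set.mem_Icc.2 ⟨hk, by omega⟩)
        (Set.mem_Icc.2 ⟨by omega, hkm⟩) (by omega)
      have hH : 0 ≤ ∑ j ∈ Icc 1 k, h j := hh k (mem_Icc.2 ⟨hk, by omega⟩)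
      rw [sum_Icc_succ_top (by omega), sum_Icc_succ_top (by omega), mul_add]
      gcongr
      exact (mul_le_mul_of_nonneg_right hdrop hH).trans (ih (by omega))
  rcases Nat.eq_zero_or_pos m with rfl | hm
  · simp
  · exact (mul_nonneg ha_m (hh m (mem_Icc.2 ⟨hm, le_rfl⟩))).trans (key m hm le_rfl)

theorem sum_mul_le_sum_mul_of_prefix_sum_le (ha : AntitoneOn a (Set.Icc 1 m)) (ha_m : 0 ≤ a m)
    (hfg : ∀ k ∈ Icc 1 m, ∑ j ∈ Icc 1 k, f j ≤ ∑ j ∈ Icc 1 k, g j) :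
    ∑ j ∈ Icc 1 m, a j * f j ≤ ∑ j ∈ Icc 1 m, a j * g j := by
  have := sum_mul_nonneg_of_prefix_sum_nonneg (h := g - f) ha ha_m fun k hk ↦ by
    simpa only [Pi.sub_apply, sum_sub_distrib, sub_nonneg] using hfg k hk
  simpa only [Pi.sub_apply, mul_sub, sum_sub_distrib, sub_nonneg] using this

end PrefixSums

theorem ratio_le_max_prefix_ratio_general
    (m : ℕ) (hm : 1 ≤ m)
    (l l' a : ℕ → ℝ)
    (hl : ∀ j, 0 ≤ l j) (hl1 : 0 < l 1)
    (ha_pos : 0 < a 1) (ha_bot : 0 ≤ a m)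
    (ha_mono : ∀ j, 1 ≤ j → j < m → a (j + 1) ≤ a j) :
    (∑ j ∈ Finset.Icc 1 m, a j * l' j) / (∑ j ∈ Finset.Icc 1 m, a j * l j) ≤
      (Finset.Icc 1 m).sup' (Finset.nonempty_Icc.mpr hm)
        (fun k => (∑ j ∈ Finset.Icc 1 k, l' j) / (∑ j ∈ Finset.Icc 1 k, l j)) := by
  set M := (Icc 1 m).sup' (nonempty_Icc.mpr hm)
    (fun k => (∑ j ∈ Icc 1 k, l' j) / (∑ j ∈ Icc 1 k, l j))
  have ha : AntitoneOn a (Set.Icc 1 m) :=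
    antitoneOn_of_succ_le Set.ordConnected_Icc fun j _ hj hj' ↦ ha_mono j hj.1 hj'.2
  have hprefix_pos : ∀ k ∈ Icc 1 m, 0 < ∑ j ∈ Icc 1 k, l j := fun k hk ↦
    sum_pos' (fun j _ ↦ hl j) ⟨1, mem_Icc.2 ⟨le_rfl, (mem_Icc.1 hk).1⟩, hl1⟩
  have hweighted_pos : 0 < ∑ j ∈ Icc 1 m, a j * l j :=
    sum_pos' (fun j hj ↦ mul_nonneg (ha_bot.trans (ha (mem_Icc.1 hj) ⟨hm, le_rfl⟩
      (mem_Icc.1 hj).2)) (hl j)) ⟨1, mem_Icc.2 ⟨le_rfl, hm⟩, mul_pos ha_pos hl1⟩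
  rw [div_le_iff₀ hweighted_pos]
  calc ∑ j ∈ Icc 1 m, a j * l' j ≤ ∑ j ∈ Icc 1 m, a j * (M * l j) :=
        sum_mul_le_sum_mul_of_prefix_sum_le ha ha_bot fun k hk ↦ by
          rw [← mul_sum]
          exact (div_le_iff₀ (hprefix_pos k hk)).1
            (le_sup' (fun k ↦ (∑ j ∈ Icc 1 k, l' j) / ∑ j ∈ Icc 1 k, l j) hk)
    _ = M * ∑ j ∈ Icc 1 m, a j * l j := by
      rw [mul_sum]
      exact sum_congr rfl fun j _ ↦ mul_left_comm _ _ _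

/-- a ratio of weighted sums with decreasing nonnegative weights is bounded
by the maximum ratio of prefix sums. -/
theorem ratio_le_max_prefix_ratio
    (m : ℕ) (hm : 1 ≤ m)
    (l l' a : ℕ → ℝ)
    (hl : ∀ j, 0 ≤ l j) (hl' : ∀ j, 0 ≤ l' j) (hl1 : 0 < l 1)
    (ha_top : a 1 ≤ 1) (ha_pos : 0 < a 1) (ha_bot : 0 ≤ a m)
    (ha_mono : ∀ j, 1 ≤ j → j < m → a (j + 1) ≤ a j) :
    (∑ j ∈ Finset.Icc 1 m, a j * l' j) / (∑ j ∈ Finset.Icc 1 m, a j * l j) ≤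
      (Finset.Icc 1 m).sup' (Finset.nonempty_Icc.mpr hm)
        (fun k => (∑ j ∈ Finset.Icc 1 k, l' j) / (∑ j ∈ Finset.Icc 1 k, l j)) :=
  ratio_le_max_prefix_ratio_general m hm l l' a hl hl1 ha_pos ha_bot ha_mono
end

section
/- Fix the reported preference orders of all agents in the Probabilistic Serial mechanism, a time t ≥ 0, a subset S of the agents, and a duration δ ≥ 0. In the pause scenario, the eating process runs as normal except that during the interval [t, t+δ] the agents in S eat at rate 0 (while the other agents continue to eat as normal), and after time t+δ all agents resume the normal rules. Then for every item j and every time s ≥ t, the remaining supply of item j at time s in the pause scenario is at least the remaining supply of item j at time s in the normal (unpaused) scenario. -/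
open MeasureTheory

/-- An execution of the Probabilistic Serial eating process with `n` agents and `m` items
(each of supply 1).  Agent `i` reports the strict preference order encoded by the injective
rank function `rk i` (`rk i j < rk i j'` means agent `i` ranks item `j` above item `j'`).
`active i t` tells whether agent `i` participates (eats at rate 1) at time `t`; the normal
scenario is `active = fun _ _ => True`, pausing/removing agents is modelled by making them
inactive.  `eats i t = some j` means agent `i` is eating item `j` at time `t`, and `rem j t`
is the remaining supply of item `j` at time `t`: it equals `1` minus the total time agents
have spent eating `j` during `(0, t]`.  An active agent always eats its most preferred item
among those with positive remaining supply. -/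
structure PSExec (n m : ℕ) (rk : Fin n → Fin m → ℕ) (active : Fin n → ℝ → Prop) where
  eats : Fin n → ℝ → Option (Fin m)
  rem : Fin m → ℝ → ℝ
  meas : ∀ i j, MeasurableSet {t : ℝ | eats i t = some j}
  rem_def : ∀ j, ∀ t : ℝ, 0 ≤ t →
    rem j t = 1 - ∑ i : Fin n,
      (volume {s : ℝ | 0 < s ∧ s ≤ t ∧ eats i s = some j}).toReal
  eats_iff : ∀ i, ∀ t : ℝ, 0 ≤ t → active i t → ∀ j,
    (eats i t = some j ↔ 0 < rem j t ∧ ∀ j', 0 < rem j' t → rk i j ≤ rk i j')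
  eats_none : ∀ i, ∀ t : ℝ, ¬ active i t → eats i t = none

namespace PSExec

variable {n m : ℕ} {rk : Fin n → Fin m → ℕ} {active : Fin n → ℝ → Prop}

/-- The total amount of item `j` eaten by agent `i` (the allocation `x i j`). -/
noncomputable def alloc (E : PSExec n m rk active) (i : Fin n) (j : Fin m) : ℝ :=
  (volume {s : ℝ | 0 < s ∧ E.eats i s = some j}).toReal

/-- The expected utility of agent `i` with cardinal utilities `a`. -/
noncomputable def utility (E : PSExec n m rk active) (a : Fin m → ℝ) (i : Fin n) : ℝ :=
  ∑ j, a j * E.alloc i j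

/-- Item `j` is exhausted exactly at time `τ`. -/
def exhaustedAt (E : PSExec n m rk active) (j : Fin m) (τ : ℝ) : Prop :=
  0 < τ ∧ E.rem j τ = 0 ∧ ∀ s : ℝ, 0 ≤ s → s < τ → 0 < E.rem j s

/-- Agent `i` is eating item `j` at the moment `τ`, in the left-limit sense (this is the
sense used for "eating an item at the moment of its exhaustion"). -/
def eatsAt (E : PSExec n m rk active) (i : Fin n) (j : Fin m) (τ : ℝ) : Prop :=
  ∃ δ > 0, ∀ s : ℝ, τ - δ < s → s < τ → E.eats i s = some j

/-- `T` is the exact moment at which the last item of `Obar` is exhausted. -/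
def exhaustTime (E : PSExec n m rk active) (Obar : Finset (Fin m)) (T : ℝ) : Prop :=
  (∀ j ∈ Obar, E.rem j T = 0) ∧ ∀ s : ℝ, 0 ≤ s → s < T → ∃ j ∈ Obar, 0 < E.rem j s

end PSExec

/-- Dichotomous cardinal utilities with interest set `Obar`. -/
def dicho {m : ℕ} (Obar : Finset (Fin m)) : Fin m → ℝ :=
  fun j => if j ∈ Obar then 1 else 0

/-!
Write `dⱼ = E.rem j - E'.rem j`; it is the primitive of the difference of the consumption rates
of item `j` in the two executions. The positive part of a primitive is absolutely continuous with
derivative `1_{dⱼ > 0} dⱼ'`, so `∑ⱼ (dⱼ s)⁺ = ∫₀ˢ ∑_{j : dⱼ > 0} dⱼ'`. At every moment, an agent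
that eats in `E'` an item on which `E'` lags behind also eats such an item in `E`: its favourite
item in `E` is either the same one or a better one, which is already exhausted in `E'`. Hence the
integrand is nonpositive and every `dⱼ s ≤ 0`.
-/

open Set Filter Topology

theorem AbsolutelyContinuousOnInterval.comp_lipschitzWith {X Y : Type*}
    [PseudoMetricSpace X] [PseudoMetricSpace Y] {f : ℝ → X} {φ : X → Y} {K : NNReal} {a b : ℝ}
    (hφ : LipschitzWith K φ) (hf : AbsolutelyContinuousOnInterval f a b) :
    AbsolutelyContinuousOnInterval (φ ∘ f) a b := by
  have hK : Tendsto (fun E : ℕ × (ℕ → ℝ × ℝ) ↦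
      (K : ℝ) * ∑ i ∈ Finset.range E.1, dist (f (E.2 i).1) (f (E.2 i).2))
      (totalLengthFilter ⊓ 𝓟 (disjWithin a b)) (𝓝 0) := by
    simpa only [mul_zero] using Tendsto.const_mul (K : ℝ) hf
  refine squeeze_zero (fun _ ↦ Finset.sum_nonneg fun _ _ ↦ dist_nonneg) (fun E ↦ ?_) hK
  rw [Finset.mul_sum]
  exact Finset.sum_le_sum fun i _ ↦ hφ.dist_le_mul _ _

theorem IntervalIntegrable.integral_indicator_primitive_pos_eq_max {g : ℝ → ℝ} {a b : ℝ}
    (hg : IntervalIntegrable g volume a b) :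
    ∫ x in a..b, {x | 0 < ∫ t in a..x, g t}.indicator g x = max (∫ t in a..b, g t) 0 := by
  set f : ℝ → ℝ := fun x ↦ ∫ t in a..x, g t
  have hF : AbsolutelyContinuousOnInterval (fun x ↦ max (f x) 0) a b :=
    (hg.absolutelyContinuousOnInterval_intervalIntegral left_mem_uIcc).comp_lipschitzWith
      (f := f) (φ := fun y ↦ max y 0) (LipschitzWith.id.max_const 0)
  have hFa : max (f a) 0 = 0 := by simp [f]
  rw [show max (f b) 0 = max (f b) 0 - max (f a) 0 by rw [hFa, sub_zero],
    ← hF.integral_deriv_eq_sub]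
  refine intervalIntegral.integral_congr_ae ?_
  filter_upwards [hg.ae_hasDerivAt_integral] with x hfx hx
  have hf : HasDerivAt f (g x) x := hfx (uIoc_subset_uIcc hx) a left_mem_uIcc
  rcases lt_trichotomy (f x) 0 with hneg | hzero | hpos
  · have hloc : (fun y ↦ max (f y) 0) =ᶠ[𝓝 x] fun _ ↦ 0 := by
      filter_upwards [hf.continuousAt.eventually (gt_mem_nhds hneg)] with y hy
      exact max_eq_right hy.le
    rw [indicator_of_notMem (show x ∉ {x | 0 < f x} from hneg.not_gt), hloc.deriv_eq,
      deriv_const]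
  · have hmin : IsLocalMin (fun y ↦ max (f y) 0) x :=
      Eventually.of_forall fun y ↦ by simp [hzero]
    rw [indicator_of_notMem (show x ∉ {x | 0 < f x} from hzero.not_gt), hmin.deriv_eq_zero]
  · have hloc : (fun y ↦ max (f y) 0) =ᶠ[𝓝 x] f := by
      filter_upwards [hf.continuousAt.eventually (lt_mem_nhds hpos)] with y hy
      exact max_eq_left hy.le
    rw [indicator_of_mem (show x ∈ {x | 0 < f x} from hpos), hloc.deriv_eq, hf.deriv]

namespace PSExec

variable {n m : ℕ} {rk : Fin n → Fin m → ℕ} {active active' : Fin n → ℝ → Prop}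

noncomputable def consumption (E : PSExec n m rk active) (j : Fin m) (u : ℝ) : ℝ :=
  ∑ i, {s | E.eats i s = some j}.indicator 1 u

theorem intervalIntegrable_consumption (E : PSExec n m rk active) (j : Fin m) (a b : ℝ) :
    IntervalIntegrable (E.consumption j) volume a b := by
  rw [intervalIntegrable_iff]
  exact integrable_finsetSum _ fun i _ ↦
    (integrableOn_const measure_Ioc_lt_top.ne).indicator (E.meas i j)

theorem rem_eq_one_sub_integral_consumption (E : PSExec n m rk active) (j : Fin m) {x : ℝ}
    (hx : 0 ≤ x) : E.rem j x = 1 - ∫ u in 0..x, E.consumption j u := by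
  have hset : ∀ i, {s : ℝ | 0 < s ∧ s ≤ x ∧ E.eats i s = some j}
      = Ioc 0 x ∩ {s | E.eats i s = some j} := fun i ↦ by
    ext s; simp [and_assoc]
  unfold consumption
  rw [E.rem_def j x hx, intervalIntegral.integral_of_le hx, integral_finsetSum]
  · congr 1
    refine Finset.sum_congr rfl fun i _ ↦ ?_
    rw [integral_indicator_one (E.meas i j), hset, measureReal_restrict_apply (E.meas i j),
      measureReal_def, inter_comm]
  · exact fun i _ ↦ (integrableOn_const measure_Ioc_lt_top.ne).indicator (E.meas i j)

theorem exists_eats_rem_lt_of_eats_rem_lt {i : Fin n} (hrk : Function.Injective (rk i))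
    (hle : active' i ≤ active i)
    (E : PSExec n m rk active) (E' : PSExec n m rk active') {u : ℝ} (hu : 0 ≤ u) {j : Fin m}
    (hj : E'.eats i u = some j) (hlt : E'.rem j u < E.rem j u) :
    ∃ j', E.eats i u = some j' ∧ E'.rem j' u < E.rem j' u := by
  have hact' : active' i u := by
    by_contra h
    simp [E'.eats_none i u h] at hj
  obtain ⟨hj_pos, hj_best⟩ := (E'.eats_iff i u hu hact' j).1 hj
  obtain ⟨j', hj'_pos, hj'_min⟩ := Finset.exists_min_image
    (Finset.univ.filter fun k ↦ 0 < E.rem k u) (rk i) ⟨j, by simpa using hj_pos.trans hlt⟩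
  simp only [Finset.mem_filter, Finset.mem_univ, true_and] at hj'_pos hj'_min
  have hj' : E.eats i u = some j' :=
    (E.eats_iff i u hu (hle u hact') j').2 ⟨hj'_pos, hj'_min⟩
  refine ⟨j', hj', ?_⟩
  rcases eq_or_ne j' j with rfl | hne
  · exact hlt
  have hrk_lt : rk i j' < rk i j :=
    (hj'_min j (by linarith)).lt_of_ne (hrk.ne hne)
  have : E'.rem j' u ≤ 0 := not_lt.1 fun h ↦ (hj_best j' h).not_gt hrk_lt
  linarith

theorem sum_indicator_eats_eq_ite (E : PSExec n m rk active) (i : Fin n) (u : ℝ) (P : Finset (Fin m)) :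
    ∑ j ∈ P, {s | E.eats i s = some j}.indicator (1 : ℝ → ℝ) u
      = if ∃ j ∈ P, E.eats i u = some j then 1 else 0 := by
  simp only [indicator_apply, mem_ofPred_eq, Pi.one_apply]
  rcases E.eats i u with _ | k <;> simp [Finset.sum_ite_eq]

theorem sum_consumption_le_of_rem_lt (hrk : ∀ i, Function.Injective (rk i))
    (hle : active' ≤ active)
    (E : PSExec n m rk active) (E' : PSExec n m rk active') {u : ℝ} (hu : 0 ≤ u) :
    ∑ j with E'.rem j u < E.rem j u, E'.consumption j u
      ≤ ∑ j with E'.rem j u < E.rem j u, E.consumption j u := by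
  unfold consumption
  rw [Finset.sum_comm]
  conv_rhs => rw [Finset.sum_comm]
  refine Finset.sum_le_sum fun i _ ↦ ?_
  rw [sum_indicator_eats_eq_ite, sum_indicator_eats_eq_ite]
  split_ifs with h' h
  · exact le_rfl
  · obtain ⟨j, hjP, hj⟩ := h'
    obtain ⟨j', hj', hlt⟩ := exists_eats_rem_lt_of_eats_rem_lt (hrk i) (hle i) E E' hu hj
      (Finset.mem_filter.1 hjP).2
    exact absurd ⟨j', Finset.mem_filter.2 ⟨Finset.mem_univ _, hlt⟩, hj'⟩ h
  · exact zero_le_one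
  · exact le_rfl

theorem rem_le_rem_of_active_le (hrk : ∀ i, Function.Injective (rk i))
    (hle : active' ≤ active)
    (E : PSExec n m rk active) (E' : PSExec n m rk active') {s : ℝ} (hs : 0 ≤ s) (j : Fin m) :
    E.rem j s ≤ E'.rem j s := by
  set d : Fin m → ℝ → ℝ := fun j u ↦ E'.consumption j u - E.consumption j u
  have hd : ∀ j a b, IntervalIntegrable (d j) volume a b := fun j a b ↦
    (E'.intervalIntegrable_consumption j a b).sub (E.intervalIntegrable_consumption j a b)
  have hgap : ∀ j x, 0 ≤ x → E.rem j x - E'.rem j x = ∫ u in 0..x, d j u := fun j x hx ↦ by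
    rw [E.rem_eq_one_sub_integral_consumption j hx, E'.rem_eq_one_sub_integral_consumption j hx,
      intervalIntegral.integral_sub (E'.intervalIntegrable_consumption j 0 x)
        (E.intervalIntegrable_consumption j 0 x)]
    ring
  set P : Fin m → Set ℝ := fun j ↦ {x | 0 < ∫ u in 0..x, d j u}
  have hP : ∀ j, IntervalIntegrable ((P j).indicator (d j)) volume 0 s := fun j ↦
    have hPm : MeasurableSet (P j) := (isOpen_lt continuous_const
      (intervalIntegral.continuous_primitive (hd j) 0)).measurableSet
    ⟨(hd j 0 s).1.indicator hPm, (hd j 0 s).2.indicator hPm⟩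
  have hpoint : ∀ u ∈ Icc 0 s, ∑ j, (P j).indicator (d j) u ≤ 0 := by
    intro u hu
    have hPu : ∀ j, u ∈ P j ↔ E'.rem j u < E.rem j u := fun j ↦ by
      rw [← sub_pos, hgap j u hu.1]; rfl
    simp only [indicator_apply, hPu, ← Finset.sum_filter, d, Finset.sum_sub_distrib]
    exact sub_nonpos.2 (sum_consumption_le_of_rem_lt hrk hle E E' hu.1)
  have hsum : ∑ j, max (∫ u in 0..s, d j u) 0 ≤ 0 := calc
    ∑ j, max (∫ u in 0..s, d j u) 0 = ∑ j, ∫ u in 0..s, (P j).indicator (d j) u :=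
      Finset.sum_congr rfl fun j _ ↦ ((hd j 0 s).integral_indicator_primitive_pos_eq_max).symm
    _ = ∫ u in 0..s, ∑ j, (P j).indicator (d j) u :=
      (intervalIntegral.integral_finsetSum fun j _ ↦ hP j).symm
    _ ≤ ∫ _ in 0..s, (0 : ℝ) :=
      intervalIntegral.integral_mono_on hs
        (by simpa only [Finset.sum_fn] using IntervalIntegrable.sum Finset.univ fun j _ ↦ hP j)
        intervalIntegrable_const hpoint
    _ = 0 := intervalIntegral.integral_zero
  have hj : max (∫ u in 0..s, d j u) 0 ≤ 0 :=
    (Finset.single_le_sum (f := fun j ↦ max (∫ u in 0..s, d j u) 0)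
      (fun _ _ ↦ le_max_right _ _) (Finset.mem_univ j)).trans hsum
  linarith [hgap j s hs, le_max_left (∫ u in 0..s, d j u) 0]

end PSExec

theorem pause_lemma_general
    (n m : ℕ) (rk : Fin n → Fin m → ℕ) (hrk : ∀ i, Function.Injective (rk i))
    (t δ : ℝ) (ht : 0 ≤ t) (S : Set (Fin n))
    (E : PSExec n m rk (fun _ _ => True))
    (Ep : PSExec n m rk (fun i s => ¬(i ∈ S ∧ t ≤ s ∧ s ≤ t + δ))) :
    ∀ j : Fin m, ∀ s : ℝ, t ≤ s → E.rem j s ≤ Ep.rem j s :=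
  fun j _ hts ↦ E.rem_le_rem_of_active_le hrk (fun _ _ _ ↦ trivial) Ep (ht.trans hts) j

/-- pause lemma: if the agents of `S` are paused during `[t, t + δ]` while all
other agents eat as normal, then at every time `s ≥ t` the remaining supply of every item in
the pause scenario is at least its remaining supply in the normal scenario. -/
theorem pause_lemma
    (n m : ℕ) (rk : Fin n → Fin m → ℕ) (hrk : ∀ i, Function.Injective (rk i))
    (t δ : ℝ) (ht : 0 ≤ t) (hδ : 0 ≤ δ) (S : Set (Fin n))
    (E : PSExec n m rk (fun _ _ => True))
    (Ep : PSExec n m rk (fun i s => ¬(i ∈ S ∧ t ≤ s ∧ s ≤ t + δ))) :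
    ∀ j : Fin m, ∀ s : ℝ, t ≤ s → E.rem j s ≤ Ep.rem j s :=
  pause_lemma_general n m rk hrk t δ ht S E Ep
end

section
/- In the Probabilistic Serial mechanism with n ≥ m, suppose agent 1's utilities are dichotomous with interest set O̅, and let T be the exhaustion time of O̅ in the truthful profile (so u_1 = T). If 0 < T < 1/2, then for every misreport of agent 1 (with the other agents' reports fixed), u'_1 ≤ (3/2)·T = (3/2)·u_1. -/
open MeasureTheory

/-! Let `D` be the set of items exhausted by time `T` in the truthful run, `r j t` and `r' j t`
the remaining supplies in the truthful and the misreported run, and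
`F t = ∑ j ∈ D, (r' j t - r j t)⁺`. At any moment, an agent other than agent 1 who truthfully eats
an item with positive excess `r' j t - r j t` also eats such an item under the misreport: either
the same one, or one it prefers, which is then already exhausted in the truthful run. Hence `F`
grows at rate at most 1, and at time `T` at most `T` of the items of `D` is left under the
misreport.

Since `T < 1/2`, every item of `O̅` is eaten by at least three agents at some moment up to `T`
in the truthful run. Whenever agent 1 eats that item after `T` under the misreport, the other two
eat items of `D`, by the same preference argument. So agent 1 eats `O̅` for at most `T / 3` after
`T`, and `u'₁ ≤ 4T/3`. -/

open Set Filter Topology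
open scoped Finset ENNReal

section Counting

variable {α ι : Type*} [MeasurableSpace α] [Fintype ι] {μ : Measure α} {G : ι → Set α}
  {S : Set α} {k : ℕ}

open Classical in
theorem sum_measure_eq_lintegral_card (hG : ∀ i, MeasurableSet (G i)) :
    ∑ i, μ (G i) = ∫⁻ x, (#{i | x ∈ G i} : ℝ≥0∞) ∂μ := by
  have hcard : ∀ x, (#{i | x ∈ G i} : ℝ≥0∞) = ∑ i, (G i).indicator 1 x := fun x => by
    simp [indicator_apply]
  simp_rw [hcard]
  rw [lintegral_finsetSum _ fun i _ => measurable_one.indicator (hG i)]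
  simp [lintegral_indicator_one (hG _)]

open Classical in
theorem mul_measureReal_le_sum_measureReal (hG : ∀ i, MeasurableSet (G i))
    (hGfin : ∀ i, μ (G i) ≠ ∞) (hS : MeasurableSet S) (hk : ∀ x ∈ S, k ≤ #{i | x ∈ G i}) :
    k * μ.real S ≤ ∑ i, μ.real (G i) := by
  have hle : (k : ℝ≥0∞) * μ S ≤ ∑ i, μ (G i) := by
    rw [sum_measure_eq_lintegral_card hG, ← lintegral_indicator_const hS]
    refine lintegral_mono fun x => ?_
    by_cases hx : x ∈ S
    · simpa [hx] using hk x hx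
    · simp [hx]
  have := ENNReal.toReal_mono (ENNReal.sum_ne_top.2 fun i _ => hGfin i) hle
  simpa [measureReal_def, ENNReal.toReal_sum fun i _ => hGfin i] using this

open Classical in
theorem exists_lt_card_of_mul_measureReal_lt (hG : ∀ i, MeasurableSet (G i))
    (hS : MeasurableSet S) (hSfin : μ S ≠ ∞) (hGS : ∀ i, G i ⊆ S)
    (h : k * μ.real S < ∑ i, μ.real (G i)) : ∃ x ∈ S, k < #{i | x ∈ G i} := by
  by_contra! hk
  have hle : ∑ i, μ (G i) ≤ k * μ S := by
    rw [sum_measure_eq_lintegral_card hG, ← lintegral_indicator_const hS]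
    refine lintegral_mono fun x => ?_
    by_cases hx : x ∈ S
    · simpa [hx] using hk x hx
    · simp [hx, fun i => notMem_subset (hGS i) hx]
  have hGfin : ∀ i, μ (G i) ≠ ∞ := fun i => ne_top_of_le_ne_top hSfin (measure_mono (hGS i))
  have := ENNReal.toReal_mono (ENNReal.mul_ne_top (ENNReal.natCast_ne_top k) hSfin) hle
  simp [measureReal_def, ENNReal.toReal_sum fun i _ => hGfin i] at this h
  linarith

end Counting

namespace PSExec

section Basic

variable {n m : ℕ} {rk : Fin n → Fin m → ℕ} {active : Fin n → ℝ → Prop}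
  (E : PSExec n m rk active) {i : Fin n} {j j' : Fin m} {P : Finset (Fin m)} {a b c s t H : ℝ}

def eatingTimes (i : Fin n) (P : Finset (Fin m)) : Set ℝ :=
  {s | ∃ j ∈ P, E.eats i s = some j}

noncomputable def eaten (i : Fin n) (P : Finset (Fin m)) (a b : ℝ) : ℝ :=
  volume.real (Ioc a b ∩ E.eatingTimes i P)

def eaters (t : ℝ) (P : Finset (Fin m)) : Finset (Fin n) :=
  {i | ∃ j ∈ P, E.eats i t = some j}

@[simp]
theorem mem_eatingTimes : s ∈ E.eatingTimes i P ↔ ∃ j ∈ P, E.eats i s = some j := Iff.rfl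

@[simp]
theorem mem_eaters : i ∈ E.eaters t P ↔ ∃ j ∈ P, E.eats i t = some j := by
  simp [eaters]

theorem measurableSet_eatingTimes (i : Fin n) (P : Finset (Fin m)) :
    MeasurableSet (E.eatingTimes i P) := by
  have : E.eatingTimes i P = ⋃ j ∈ P, {s | E.eats i s = some j} := by ext; simp
  rw [this]
  exact Finset.measurableSet_biUnion P fun j _ => E.meas i j

theorem volume_Ioc_inter_eatingTimes_ne_top (i : Fin n) (P : Finset (Fin m)) (a b : ℝ) :
    volume (Ioc a b ∩ E.eatingTimes i P) ≠ ∞ :=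
  ne_top_of_le_ne_top measure_Ioc_lt_top.ne (measure_mono inter_subset_left)

theorem eaten_nonneg (i : Fin n) (P : Finset (Fin m)) (a b : ℝ) : 0 ≤ E.eaten i P a b :=
  measureReal_nonneg

theorem eaten_le (i : Fin n) (P : Finset (Fin m)) (hab : a ≤ b) : E.eaten i P a b ≤ b - a := by
  rw [← Real.volume_real_Ioc_of_le hab]
  exact measureReal_mono inter_subset_left measure_Ioc_lt_top.ne

theorem eaten_add_eaten (i : Fin n) (P : Finset (Fin m)) (hab : a ≤ b) (hbc : b ≤ c) :
    E.eaten i P a b + E.eaten i P b c = E.eaten i P a c := by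
  rw [eaten, eaten, eaten, ← Ioc_union_Ioc_eq_Ioc hab hbc, union_inter_distrib_right,
    measureReal_union ((Ioc_disjoint_Ioc_of_le le_rfl).mono inter_subset_left inter_subset_left)
      (measurableSet_Ioc.inter (E.measurableSet_eatingTimes i P))
      (E.volume_Ioc_inter_eatingTimes_ne_top i P a b)
      (E.volume_Ioc_inter_eatingTimes_ne_top i P b c)]

theorem eaten_eq_sum (i : Fin n) (P : Finset (Fin m)) (a b : ℝ) :
    E.eaten i P a b = ∑ j ∈ P, E.eaten i {j} a b := by
  have : Ioc a b ∩ E.eatingTimes i P = ⋃ j ∈ P, Ioc a b ∩ E.eatingTimes i {j} := by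
    ext; simp
  rw [eaten, this, measureReal_biUnion_finset _
    (fun j _ => measurableSet_Ioc.inter (E.measurableSet_eatingTimes i {j}))
    (fun j _ => E.volume_Ioc_inter_eatingTimes_ne_top i {j} a b)]
  · rfl
  · intro j _ j' _ hjj'
    simp only [Function.onFun, disjoint_left, mem_inter_iff, mem_eatingTimes,
      Finset.mem_singleton, exists_eq_left]
    rintro s ⟨-, hs⟩ ⟨-, hs'⟩
    exact hjj' (Option.some_injective _ (hs.symm.trans hs'))

theorem card_eaters_eq_sum (t : ℝ) (P : Finset (Fin m)) :
    #(E.eaters t P) = ∑ j ∈ P, #(E.eaters t {j}) := by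
  have : E.eaters t P = P.biUnion fun j => E.eaters t {j} := by ext; simp
  rw [this, Finset.card_biUnion]
  intro j _ j' _ hjj'
  simp only [Function.onFun, Finset.disjoint_left, mem_eaters, Finset.mem_singleton,
    exists_eq_left]
  intro i hi hi'
  exact hjj' (Option.some_injective _ (hi.symm.trans hi'))

theorem rem_eq (j : Fin m) (ht : 0 ≤ t) : E.rem j t = 1 - ∑ i, E.eaten i {j} 0 t := by
  rw [E.rem_def j t ht]
  congr 2 with i
  simp only [eaten, measureReal_def]
  congr 2 with s
  simp [and_assoc]

theorem rem_zero (j : Fin m) : E.rem j 0 = 1 := by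
  simp [E.rem_eq j le_rfl, eaten]

theorem rem_sub_rem (j : Fin m) (ha : 0 ≤ a) (hab : a ≤ b) :
    E.rem j a - E.rem j b = ∑ i, E.eaten i {j} a b := by
  simp only [E.rem_eq j ha, E.rem_eq j (ha.trans hab), ← E.eaten_add_eaten _ _ ha hab,
    Finset.sum_add_distrib]
  ring

theorem rem_antitoneOn (j : Fin m) : AntitoneOn (E.rem j) (Ici 0) := fun a ha b _ hab => by
  have := E.rem_sub_rem j ha hab
  have := Finset.sum_nonneg fun i (_ : i ∈ Finset.univ) => E.eaten_nonneg i {j} a b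
  linarith

theorem continuousOn_rem (j : Fin m) : ContinuousOn (E.rem j) (Ici 0) := by
  refine (LipschitzOnWith.of_le_add_mul n fun a ha b hb => ?_).continuousOn
  rcases le_total a b with hab | hba
  · have hsum := E.rem_sub_rem j ha hab
    have := Finset.sum_le_sum fun i (_ : i ∈ Finset.univ) => E.eaten_le i {j} hab
    simp only [Finset.sum_const, Finset.card_univ, Fintype.card_fin, nsmul_eq_mul] at this
    rw [Real.dist_eq, abs_of_nonpos (by linarith)]
    push_cast
    linarith
  · have := E.rem_antitoneOn j hb ha hba
    have : (0 : ℝ) ≤ n * dist a b := by positivity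
    push_cast
    linarith

theorem active_of_eats (h : E.eats i t = some j) : active i t := by
  by_contra hi
  simp [E.eats_none i t hi] at h

theorem rem_pos_of_eats (ht : 0 ≤ t) (h : E.eats i t = some j) : 0 < E.rem j t :=
  ((E.eats_iff i t ht (E.active_of_eats h) j).1 h).1

theorem rank_le_of_eats (ht : 0 ≤ t) (h : E.eats i t = some j) (hj' : 0 < E.rem j' t) :
    rk i j ≤ rk i j' :=
  ((E.eats_iff i t ht (E.active_of_eats h) j).1 h).2 j' hj'

theorem eaten_eq_zero_of_rem_eq_zero (ha : 0 ≤ a) (h : E.rem j a = 0) (i : Fin n) (b : ℝ) :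
    E.eaten i {j} a b = 0 := by
  have : Ioc a b ∩ E.eatingTimes i {j} = ∅ := by
    ext s
    simp only [mem_inter_iff, mem_Ioc, mem_eatingTimes, Finset.mem_singleton, exists_eq_left,
      mem_empty_iff_false, iff_false, not_and]
    rintro ⟨has, -⟩ he
    have := E.rem_antitoneOn j ha (ha.trans has.le) has.le
    linarith [E.rem_pos_of_eats (ha.trans has.le) he]
  simp [eaten, this]

theorem rem_nonneg (j : Fin m) (ht : 0 ≤ t) : 0 ≤ E.rem j t := by
  by_contra! hneg
  obtain ⟨u, ⟨hu0, hut⟩, hu⟩ : ∃ u ∈ Icc 0 t, E.rem j u = 0 :=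
    intermediate_value_Icc' ht ((E.continuousOn_rem j).mono Icc_subset_Ici_self)
      ⟨hneg.le, by simp [E.rem_zero]⟩
  have := E.rem_sub_rem j hu0 hut
  simp only [E.eaten_eq_zero_of_rem_eq_zero hu0 hu, Finset.sum_const_zero] at this
  linarith

theorem rem_eq_zero_of_le (ha : 0 ≤ a) (hab : a ≤ b) (h : E.rem j a = 0) : E.rem j b = 0 :=
  le_antisymm (h ▸ E.rem_antitoneOn j ha (ha.trans hab) hab) (E.rem_nonneg j (ha.trans hab))

theorem eaten_singleton_eq_of_eats_eq {o : Option (Fin m)} (hab : a ≤ b)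
    (h : ∀ s ∈ Ioc a b, E.eats i s = o) :
    E.eaten i {j} a b = if o = some j then b - a else 0 := by
  have : Ioc a b ∩ E.eatingTimes i {j} = if o = some j then Ioc a b else ∅ := by
    ext s
    by_cases hs : s ∈ Ioc a b <;> split_ifs with ho <;> simp [hs, h s, ho]
  rw [eaten, this]
  split_ifs <;> simp [Real.volume_real_Ioc_of_le hab]

theorem rem_sub_rem_of_eats_eq (ha : 0 ≤ a) (hab : a ≤ b)
    (h : ∀ i, ∀ s ∈ Ioc a b, E.eats i s = E.eats i b) (j : Fin m) :
    E.rem j a - E.rem j b = (b - a) * #(E.eaters b {j}) := by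
  rw [E.rem_sub_rem j ha hab,
    Finset.sum_congr rfl fun i _ => E.eaten_singleton_eq_of_eats_eq hab (h i)]
  simp only [Finset.sum_ite, Finset.sum_sub_distrib, Finset.sum_const, nsmul_eq_mul,
    eaters, Finset.mem_singleton, exists_eq_left]
  ring

theorem sum_eaten_eq_sum_rem_sub (D : Finset (Fin m)) (ha : 0 ≤ a) (hab : a ≤ b) :
    ∑ i, E.eaten i D a b = ∑ j ∈ D, (E.rem j a - E.rem j b) := by
  simp only [E.eaten_eq_sum _ D, E.rem_sub_rem _ ha hab]
  exact Finset.sum_comm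

theorem alloc_eq_eaten (hH0 : 0 ≤ H) (hH : E.rem j H = 0) (i : Fin n) :
    E.alloc i j = E.eaten i {j} 0 H := by
  have : {s | 0 < s ∧ E.eats i s = some j} = Ioc 0 H ∩ E.eatingTimes i {j} := by
    ext s
    simp only [mem_ofPred_eq, mem_inter_iff, mem_Ioc, mem_eatingTimes, Finset.mem_singleton,
      exists_eq_left]
    refine ⟨fun ⟨hs, he⟩ => ⟨⟨hs, not_lt.1 fun hHs => ?_⟩, he⟩, fun ⟨⟨hs, _⟩, he⟩ => ⟨hs, he⟩⟩
    have := E.rem_pos_of_eats hs.le he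
    rw [E.rem_eq_zero_of_le hH0 hHs.le hH] at this
    exact lt_irrefl _ this
  rw [alloc, this]
  rfl

theorem utility_dicho_eq_eaten {Obar : Finset (Fin m)} (hH0 : 0 ≤ H)
    (hH : ∀ j ∈ Obar, E.rem j H = 0) (i : Fin n) :
    E.utility (dicho Obar) i = E.eaten i Obar 0 H := by
  simp only [utility, dicho, ite_mul, one_mul, zero_mul]
  rw [Finset.sum_ite_mem, Finset.univ_inter, E.eaten_eq_sum]
  exact Finset.sum_congr rfl fun j hj => E.alloc_eq_eaten hH0 (hH j hj) i

theorem exists_lt_card_eaters {k : ℕ} (hab : a ≤ b) (h : k * (b - a) < ∑ i, E.eaten i P a b) :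
    ∃ s ∈ Ioc a b, k < #(E.eaters s P) := by
  classical
  obtain ⟨s, hs, hk⟩ := exists_lt_card_of_mul_measureReal_lt (μ := volume)
    (fun i => measurableSet_Ioc.inter (E.measurableSet_eatingTimes i P)) measurableSet_Ioc
    measure_Ioc_lt_top.ne (fun i => inter_subset_left)
    (by rwa [Real.volume_real_Ioc_of_le hab])
  refine ⟨s, hs, hk.trans_le (Finset.card_le_card fun i hi => ?_)⟩
  simp only [Finset.mem_filter, Finset.mem_univ, true_and, mem_inter_iff] at hi
  simpa using hi.2

theorem mul_eaten_le_sum_eaten {k : ℕ} (i₀ : Fin n) (Q : Finset (Fin m))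
    (hk : ∀ s ∈ Ioc a b, s ∈ E.eatingTimes i₀ Q → k ≤ #(E.eaters s P)) :
    k * E.eaten i₀ Q a b ≤ ∑ i, E.eaten i P a b := by
  classical
  refine mul_measureReal_le_sum_measureReal
    (fun i => measurableSet_Ioc.inter (E.measurableSet_eatingTimes i P))
    (fun i => E.volume_Ioc_inter_eatingTimes_ne_top i P a b)
    (measurableSet_Ioc.inter (E.measurableSet_eatingTimes i₀ Q)) fun s hs => ?_
  refine (hk s hs.1 hs.2).trans (Finset.card_le_card fun i hi => ?_)
  simpa [hs.1] using hi

theorem exists_two_lt_card_eaters (ht : 0 ≤ b) (hb : 2 * b < 1) (h : E.rem j b = 0) :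
    ∃ s ∈ Ioc 0 b, 2 < #(E.eaters s {j}) := by
  refine E.exists_lt_card_eaters ht ?_
  have := E.rem_eq j ht
  push_cast
  linarith

end Basic

section AllActive

variable {n m : ℕ} {rk : Fin n → Fin m → ℕ} (E : PSExec n m rk (fun _ _ => True))
  {i : Fin n} {j : Fin m} {s t x H T : ℝ}

theorem exists_eats (i : Fin n) (ht : 0 ≤ t) (h : 0 < E.rem j t) : ∃ j', E.eats i t = some j' := by
  obtain ⟨j', hj', hmin⟩ := Finset.exists_min_image {j | 0 < E.rem j t} (rk i) ⟨j, by simpa⟩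
  exact ⟨j', (E.eats_iff i t ht trivial j').2
    ⟨by simpa using hj', fun j'' h'' => hmin j'' (by simpa using h'')⟩⟩

theorem eats_eq_of_rem_pos_iff (hs : 0 ≤ s) (ht : 0 ≤ t)
    (h : ∀ j, 0 < E.rem j s ↔ 0 < E.rem j t) (i : Fin n) : E.eats i s = E.eats i t :=
  Option.ext fun j => by simp only [E.eats_iff i s hs trivial, E.eats_iff i t ht trivial, h]

theorem exists_eats_eq_on_Ico (hx : 0 ≤ x) :
    ∃ u > x, ∀ i, ∀ s ∈ Ico x u, E.eats i s = E.eats i x := by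
  have hev : ∀ᶠ s in 𝓝[≥] x, ∀ j, (0 < E.rem j s ↔ 0 < E.rem j x) := by
    refine eventually_all.2 fun j => ?_
    by_cases hj : 0 < E.rem j x
    · have hcont := ((E.continuousOn_rem j).continuousWithinAt hx).mono (Ici_subset_Ici.2 hx)
      filter_upwards [hcont.eventually_const_lt hj] with s hs using iff_of_true hs hj
    · filter_upwards [self_mem_nhdsWithin] with s (hs : x ≤ s)
      exact iff_of_false (fun h => hj (h.trans_le (E.rem_antitoneOn j hx (hx.trans hs) hs))) hj
  obtain ⟨u, hu, hsub⟩ := mem_nhdsGE_iff_exists_Ico_subset.1 hev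
  exact ⟨u, hu, fun i s hs => E.eats_eq_of_rem_pos_iff (hx.trans hs.1) hx (hsub hs) i⟩

theorem rem_eq_zero_of_le_mul (ht : (m : ℝ) ≤ n * t) (j : Fin m) : E.rem j t = 0 := by
  have ht0 : 0 < t := by
    have : (1 : ℝ) ≤ m := by exact_mod_cast j.pos
    by_contra! h
    nlinarith [(n.cast_nonneg : (0 : ℝ) ≤ n)]
  by_contra hne
  have hpos : 0 < E.rem j t := (E.rem_nonneg j ht0.le).lt_of_ne' hne
  have hfull : ∀ i, E.eaten i Finset.univ 0 t = t := fun i => by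
    have : Ioc 0 t ∩ E.eatingTimes i Finset.univ = Ioc 0 t := inter_eq_left.2 fun s hs => by
      obtain ⟨j', hj'⟩ := E.exists_eats i hs.1.le
        (hpos.trans_le (E.rem_antitoneOn j hs.1.le ht0.le hs.2))
      exact ⟨j', Finset.mem_univ _, hj'⟩
    rw [eaten, this, Real.volume_real_Ioc_of_le ht0.le, sub_zero]
  have hsum : ∑ j', (1 - E.rem j' t) = n * t := by
    simp_rw [E.rem_eq _ ht0.le, sub_sub_cancel]
    rw [Finset.sum_comm]
    simp [← E.eaten_eq_sum, hfull]
  have : ∑ j', (1 - E.rem j' t) < m := by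
    calc ∑ j', (1 - E.rem j' t) < ∑ _j' : Fin m, (1 : ℝ) :=
          Finset.sum_lt_sum (fun j' _ => by linarith [E.rem_nonneg j' ht0.le])
            ⟨j, Finset.mem_univ _, by linarith⟩
      _ = m := by simp
  linarith

theorem eaten_eq_of_exhaustTime {Obar : Finset (Fin m)}
    (htruth : ∀ j ∈ Obar, ∀ j' ∉ Obar, rk i j < rk i j') (hT : E.exhaustTime Obar T)
    (hT0 : 0 ≤ T) (hTH : T ≤ H) : E.eaten i Obar 0 H = T := by
  have : Ioc 0 H ∩ E.eatingTimes i Obar = Ioo 0 T := by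
    ext s
    simp only [mem_inter_iff, mem_Ioc, mem_eatingTimes, mem_Ioo]
    constructor
    · rintro ⟨⟨hs0, -⟩, j, hj, he⟩
      refine ⟨hs0, not_le.1 fun hTs => ?_⟩
      have := E.rem_pos_of_eats hs0.le he
      rw [E.rem_eq_zero_of_le hT0 hTs (hT.1 j hj)] at this
      exact lt_irrefl _ this
    · rintro ⟨hs0, hsT⟩
      obtain ⟨j, hj, hpos⟩ := hT.2 s hs0.le hsT
      obtain ⟨j', he⟩ := E.exists_eats i hs0.le hpos
      refine ⟨⟨hs0, hsT.le.trans hTH⟩, j', ?_, he⟩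
      by_contra hj'
      exact (E.rank_le_of_eats hs0.le he hpos).not_gt (htruth j hj j' hj')
  rw [eaten, this, Real.volume_real_Ioo_of_le hT0, sub_zero]

end AllActive

noncomputable def excess {n m : ℕ} {rk rk' : Fin n → Fin m → ℕ} {active active' : Fin n → ℝ → Prop}
    (E : PSExec n m rk active) (E' : PSExec n m rk' active') (D : Finset (Fin m)) (t : ℝ) : ℝ :=
  ∑ j ∈ D, max (E'.rem j t - E.rem j t) 0

section Misreport

variable {n m : ℕ} {rk rk' : Fin n → Fin m → ℕ} (E : PSExec n m rk (fun _ _ => True))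
  (E' : PSExec n m rk' (fun _ _ => True)) {i i1 : Fin n} {j j' : Fin m} {D : Finset (Fin m)}
  {s u x z T : ℝ}

theorem eq_or_rem_eq_zero_of_eats (hrk : Function.Injective (rk i)) (hi : rk' i = rk i)
    (hu : 0 ≤ u) (hs : 0 ≤ s) (hE : E.eats i u = some j) (hE' : E'.eats i s = some j')
    (hj : 0 < E'.rem j s) : j' = j ∨ E.rem j' u = 0 := by
  refine or_iff_not_imp_left.2 fun hne => le_antisymm (not_lt.1 fun hpos => hne ?_)
    (E.rem_nonneg j' hu)
  have h1 : rk i j' ≤ rk i j := by simpa [hi] using E'.rank_le_of_eats hs hE' hj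
  exact hrk (le_antisymm h1 (E.rank_le_of_eats hu hE hpos))

theorem eaters_subset_insert_eaters (hrk : ∀ i, Function.Injective (rk i))
    (hsame : ∀ i, i ≠ i1 → rk' i = rk i) (hs : 0 ≤ s) (hD : ∀ j, E.rem j s = 0 → j ∈ D) :
    E.eaters s {j ∈ D | E.rem j s < E'.rem j s}
      ⊆ insert i1 (E'.eaters s {j ∈ D | E.rem j s < E'.rem j s}) := by
  intro i hi
  rcases eq_or_ne i i1 with rfl | hi1
  · exact Finset.mem_insert_self _ _
  simp only [mem_eaters, Finset.mem_filter] at hi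
  obtain ⟨j, ⟨hjD, hlt⟩, he⟩ := hi
  have hj : 0 < E'.rem j s := (E.rem_pos_of_eats hs he).trans hlt
  obtain ⟨j', he'⟩ := E'.exists_eats i hs hj
  refine Finset.mem_insert_of_mem ((E'.mem_eaters).2 ⟨j', Finset.mem_filter.2 ?_, he'⟩)
  rcases E.eq_or_rem_eq_zero_of_eats E' (hrk i) (hsame i hi1) hs hs he he' hj with rfl | h
  · exact ⟨hjD, hlt⟩
  · exact ⟨hD j' h, h ▸ E'.rem_pos_of_eats hs he'⟩

theorem excess_sub_excess_le (hrk : ∀ i, Function.Injective (rk i))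
    (hsame : ∀ i, i ≠ i1 → rk' i = rk i) (hD : ∀ j, E.rem j z = 0 → j ∈ D) (hx : 0 ≤ x)
    (hxz : x ≤ z) (hE : ∀ i, ∀ s ∈ Ioc x z, E.eats i s = E.eats i z)
    (hE' : ∀ i, ∀ s ∈ Ioc x z, E'.eats i s = E'.eats i z) :
    excess E E' D z - excess E E' D x ≤ z - x := by
  set P := {j ∈ D | E.rem j z < E'.rem j z}
  have hslope : ∀ j, (E'.rem j z - E.rem j z) - (E'.rem j x - E.rem j x)
      = (z - x) * (#(E.eaters z {j}) - #(E'.eaters z {j})) := fun j => by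
    linear_combination E.rem_sub_rem_of_eats_eq hx hxz hE j
      - E'.rem_sub_rem_of_eats_eq hx hxz hE' j
  -- the positive part can only grow through the coordinates that are positive at `z`
  have hpos : ∀ p q : ℝ, max q 0 - max p 0 ≤ if 0 < q then q - p else 0 := fun p q => by
    split_ifs with hq
    · rw [max_eq_left hq.le]; linarith [le_max_left p 0]
    · rw [max_eq_right (not_lt.1 hq)]; linarith [le_max_right p 0]
  have hcard : (#(E.eaters z P) : ℝ) ≤ #(E'.eaters z P) + 1 := by
    exact_mod_cast (Finset.card_le_card
      (E.eaters_subset_insert_eaters E' hrk hsame (hx.trans hxz) hD)).trans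
      (Finset.card_insert_le _ _)
  calc excess E E' D z - excess E E' D x
      = ∑ j ∈ D, (max (E'.rem j z - E.rem j z) 0 - max (E'.rem j x - E.rem j x) 0) := by
        rw [excess, excess, Finset.sum_sub_distrib]
    _ ≤ ∑ j ∈ D, if E.rem j z < E'.rem j z then
          (z - x) * (#(E.eaters z {j}) - #(E'.eaters z {j})) else 0 :=
        Finset.sum_le_sum fun j _ => by
          simpa only [sub_pos, hslope] using hpos (E'.rem j x - E.rem j x) (E'.rem j z - E.rem j z)
    _ = (z - x) * (#(E.eaters z P) - #(E'.eaters z P)) := by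
        rw [← Finset.sum_filter, ← Finset.mul_sum, Finset.sum_sub_distrib,
          E.card_eaters_eq_sum, E'.card_eaters_eq_sum]
        push_cast
        rfl
    _ ≤ z - x := by nlinarith

theorem excess_zero (D : Finset (Fin m)) : excess E E' D 0 = 0 := by
  simp [excess, rem_zero]

theorem continuousOn_excess (D : Finset (Fin m)) : ContinuousOn (excess E E' D) (Ici 0) :=
  continuousOn_finsetSum D fun j _ =>
    ((E'.continuousOn_rem j).sub (E.continuousOn_rem j)).sup continuousOn_const

theorem eventually_excess_sub_le (hrk : ∀ i, Function.Injective (rk i))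
    (hsame : ∀ i, i ≠ i1 → rk' i = rk i) (hD : ∀ j, E.rem j T = 0 → j ∈ D) (hx : 0 ≤ x)
    (hxT : x < T) : ∀ᶠ z in 𝓝[>] x, excess E E' D z - excess E E' D x ≤ z - x := by
  obtain ⟨u, hxu, hu⟩ := E.exists_eats_eq_on_Ico hx
  obtain ⟨u', hxu', hu'⟩ := E'.exists_eats_eq_on_Ico hx
  filter_upwards [Ioo_mem_nhdsGT (lt_min (lt_min hxu hxu') hxT)] with z ⟨hxz, hz⟩
  simp only [lt_min_iff] at hz
  refine E.excess_sub_excess_le E' hrk hsame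
    (fun j hj => hD j (E.rem_eq_zero_of_le (hx.trans hxz.le) hz.2.le hj)) hx hxz.le
    (fun i s hs => ?_) (fun i s hs => ?_)
  · rw [hu i s ⟨hs.1.le, hs.2.trans_lt hz.1.1⟩, hu i z ⟨hxz.le, hz.1.1⟩]
  · rw [hu' i s ⟨hs.1.le, hs.2.trans_lt hz.1.2⟩, hu' i z ⟨hxz.le, hz.1.2⟩]

theorem excess_le (hrk : ∀ i, Function.Injective (rk i)) (hsame : ∀ i, i ≠ i1 → rk' i = rk i)
    (hD : ∀ j, E.rem j T = 0 → j ∈ D) (hT : 0 ≤ T) : excess E E' D T ≤ T := by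
  refine image_le_of_liminf_slope_right_le_deriv_boundary (B := id) (B' := fun _ => 1)
    ((E.continuousOn_excess E' D).mono Icc_subset_Ici_self) (by simp [excess_zero])
    continuousOn_id (fun x _ => hasDerivWithinAt_id x _) (fun x hx r hr => ?_) ⟨hT, le_rfl⟩
  refine Eventually.frequently ?_
  filter_upwards [E.eventually_excess_sub_le E' hrk hsame hD hx.1 hx.2, self_mem_nhdsWithin]
    with z hz (hxz : x < z)
  rw [slope_def_field]
  exact ((div_le_one (sub_pos.2 hxz)).2 hz).trans_lt hr

theorem two_lt_card_eaters_exhausted (hrk : ∀ i, Function.Injective (rk i))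
    (hsame : ∀ i, i ≠ i1 → rk' i = rk i) (hT0 : 0 ≤ T) (hT : 2 * T < 1)
    (hD : ∀ j, E.rem j T = 0 → j ∈ D) (hs : T ≤ s) (hjT : E.rem j T = 0)
    (hj : E'.eats i1 s = some j) : 2 < #(E'.eaters s D) := by
  obtain ⟨u, ⟨hu0, huT⟩, hu⟩ := E.exists_two_lt_card_eaters hT0 hT hjT
  refine hu.trans_le (Finset.card_le_card fun i hi => ?_)
  have hs0 : 0 ≤ s := hT0.trans hs
  have hjs : 0 < E'.rem j s := E'.rem_pos_of_eats hs0 hj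
  simp only [mem_eaters, Finset.mem_singleton, exists_eq_left] at hi ⊢
  rcases eq_or_ne i i1 with rfl | hi1
  · exact ⟨j, hD j hjT, hj⟩
  obtain ⟨j', hj'⟩ := E'.exists_eats i hs0 hjs
  refine ⟨j', ?_, hj'⟩
  rcases E.eq_or_rem_eq_zero_of_eats E' (hrk i) (hsame i hi1) hu0.le hs0 hi hj' hjs with rfl | h
  · exact hD _ hjT
  · exact hD _ (E.rem_eq_zero_of_le hu0.le huT h)

end Misreport

end PSExec

theorem ps_case_T_lt_half_general
    (n m : ℕ)
    (rk rk' : Fin n → Fin m → ℕ)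
    (hrk : ∀ i, Function.Injective (rk i))
    (i1 : Fin n) (hsame : ∀ i, i ≠ i1 → rk' i = rk i)
    (Obar : Finset (Fin m))
    (htruth : ∀ j ∈ Obar, ∀ j' ∉ Obar, rk i1 j < rk i1 j')
    (E : PSExec n m rk (fun _ _ => True)) (E' : PSExec n m rk' (fun _ _ => True))
    (T : ℝ) (hT : E.exhaustTime Obar T) (hT0 : 0 < T) (hThalf : T < 1 / 2) :
    E.utility (dicho Obar) i1 = T ∧ E'.utility (dicho Obar) i1 ≤ (3 / 2) * T := by
  set H : ℝ := T + m
  have hTH : T ≤ H := le_add_of_nonneg_right m.cast_nonneg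
  have hmH : (m : ℝ) ≤ n * H := by
    have : (1 : ℝ) ≤ n := by exact_mod_cast i1.pos
    nlinarith [(m.cast_nonneg : (0 : ℝ) ≤ m)]
  have hH0 : 0 ≤ H := hT0.le.trans hTH
  refine ⟨?_, ?_⟩
  · rw [E.utility_dicho_eq_eaten hH0 (fun j _ => E.rem_eq_zero_of_le_mul hmH j)]
    exact E.eaten_eq_of_exhaustTime htruth hT hT0.le hTH
  set D : Finset (Fin m) := {j | E.rem j T = 0}
  have hD : ∀ j, E.rem j T = 0 → j ∈ D := fun j hj => by simpa [D] using hj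
  have hthree : 3 * E'.eaten i1 Obar T H ≤ ∑ i, E'.eaten i D T H := by
    exact_mod_cast E'.mul_eaten_le_sum_eaten i1 Obar fun s hs ⟨j, hj, he⟩ =>
      E.two_lt_card_eaters_exhausted E' hrk hsame hT0.le (by linarith) hD hs.1.le
        (hT.1 j hj) he
  have hafter : ∑ i, E'.eaten i D T H ≤ T := by
    rw [E'.sum_eaten_eq_sum_rem_sub D hT0.le hTH]
    refine le_trans ?_ (E.excess_le E' hrk hsame hD hT0.le)
    refine Finset.sum_le_sum fun j hj => ?_
    simp only [D, Finset.mem_filter, Finset.mem_univ, true_and] at hj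
    rw [hj, sub_zero, E'.rem_eq_zero_of_le_mul hmH, sub_zero]
    exact le_max_left _ _
  rw [E'.utility_dicho_eq_eaten hH0 (fun j _ => E'.rem_eq_zero_of_le_mul hmH j),
    ← E'.eaten_add_eaten i1 Obar hT0.le hTH]
  linarith [E'.eaten_le i1 Obar hT0.le]

/-- dichotomous utilities, truthful exhaustion time `T` of the interest set with
`0 < T < 1/2`: the truthful utility equals `T` and no misreport yields more than `(3/2)·T`. -/
theorem ps_case_T_lt_half
    (n m : ℕ) (hnm : m ≤ n)
    (rk rk' : Fin n → Fin m → ℕ)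
    (hrk : ∀ i, Function.Injective (rk i)) (hrk' : ∀ i, Function.Injective (rk' i))
    (i1 : Fin n) (hsame : ∀ i, i ≠ i1 → rk' i = rk i)
    (Obar : Finset (Fin m))
    (htruth : ∀ j ∈ Obar, ∀ j' ∉ Obar, rk i1 j < rk i1 j')
    (E : PSExec n m rk (fun _ _ => True)) (E' : PSExec n m rk' (fun _ _ => True))
    (T : ℝ) (hT : E.exhaustTime Obar T) (hT0 : 0 < T) (hThalf : T < 1 / 2) :
    E.utility (dicho Obar) i1 = T ∧ E'.utility (dicho Obar) i1 ≤ (3 / 2) * T :=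
  ps_case_T_lt_half_general n m rk rk' hrk i1 hsame Obar htruth E E' T hT hT0 hThalf
end
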